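/- For purposive discrete distributions F and G, the following are equivalent: (i) F ≼_∧ G and G ≼_∧ F; (ii) F ≼_∨ G and G ≼_∨ F; (iii) there exists λ ∈ ℝ with G(t) = F(t - λ) for all t ∈ ℝ. -/

import Mathlib

/-!
If `F ≼_∧ G` and `G ≼_∧ F`, overlapping atoms carry the same mass. Overlapping jump intervals
then start at the same point: a positive offset would propagate upwards forever along atoms of
one fixed mass, which summability forbids. So the jump intervals of `F` and `G` coincide up to a
shift `k` of indices, and the spacing conditions of both orders make the support points differ by
one constant. Conversely, a translation moves every quantile by the same amount, so the jump
intervals coincide and both orders hold with equality in either direction.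
-/

/-- A purposive discrete distribution: support indexed by an interval of `ℤ`
with at least two elements, strictly increasing support points `x` and
positive probabilities `p` summing to one. -/
structure DiscDist where
  A : Set ℤ
  x : ℤ → ℝ
  p : ℤ → ℝ
  hA2 : ∃ a b, a ∈ A ∧ b ∈ A ∧ a ≠ b
  hAconn : ∀ a b c : ℤ, a ∈ A → c ∈ A → a ≤ b → b ≤ c → b ∈ A
  hmono : ∀ a b : ℤ, a ∈ A → b ∈ A → a < b → x a < x b
  hpos : ∀ a ∈ A, 0 < p a
  hzero : ∀ a ∉ A, p a = 0
  hsummable : Summable p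
  hsum : ∑' a, p a = 1

/-- Cumulative probability strictly below index `a`, i.e. `F(x_{a-1})`. -/
noncomputable def DiscDist.L (D : DiscDist) (a : ℤ) : ℝ :=
  ∑' i : ℤ, if i < a then D.p i else 0

/-- The relation `a ▷◁ b`: the jump intervals `(F(x_{a-1}), F(x_a))` and
`(G(y_{b-1}), G(y_b))` intersect. -/
def DRel (F G : DiscDist) (a b : ℤ) : Prop :=
  a ∈ F.A ∧ b ∈ G.A ∧
    max (F.L a) (G.L b) < min (F.L (a + 1)) (G.L (b + 1))

/-- The ∧-discrete dispersive order `F ≼_∧ G`. -/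
def discoA (F G : DiscDist) : Prop :=
  (∀ a b, DRel F G a b → G.p b ≤ F.p a) ∧
  (∀ a b, DRel F G a b → DRel F G (a - 1) (b - 1) →
    F.x a - F.x (a - 1) ≤ G.x b - G.x (b - 1))

/-- The ∨-discrete dispersive order `F ≼_∨ G`. -/
def discoO (F G : DiscDist) : Prop :=
  (∀ a b, DRel F G a b → G.p b ≤ F.p a) ∧
  (∀ a b, a ∈ F.A → a - 1 ∈ F.A → b ∈ G.A → b - 1 ∈ G.A →
    (DRel F G a b ∨ DRel F G (a - 1) (b - 1)) →
    F.x a - F.x (a - 1) ≤ G.x b - G.x (b - 1))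

/-- Cumulative distribution function of a discrete distribution. -/
noncomputable def DiscDist.cdf (D : DiscDist) (t : ℝ) : ℝ :=
  ∑' a : ℤ, if D.x a ≤ t then D.p a else 0

theorem Set.OrdConnected.int_induction {S : Set ℤ} (hS : S.OrdConnected) {a₀ : ℤ} (h₀ : a₀ ∈ S)
    {P : ℤ → Prop} (base : P a₀) (succ : ∀ a, a ∈ S → a + 1 ∈ S → P a → P (a + 1))
    (pred : ∀ a, a ∈ S → a + 1 ∈ S → P (a + 1) → P a) : ∀ a ∈ S, P a := by
  intro a ha
  rcases le_total a₀ a with h | h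
  · induction a, h using Int.leInduction with
    | base => exact base
    | succ n hn ih =>
      have hn' : n ∈ S := hS.out h₀ ha ⟨hn, by omega⟩
      exact succ n hn' ha (ih hn')
  · induction a, h using Int.leInductionDown with
    | base => exact base
    | pred n hn ih =>
      have hn' : n ∈ S := hS.out ha h₀ ⟨by omega, hn⟩
      exact pred (n - 1) ha (by simpa using hn') (by simpa using ih hn')

namespace DiscDist

variable (D : DiscDist)

theorem ordConnected : D.A.OrdConnected :=
  ⟨fun a ha c hc b hb => D.hAconn a b c ha hc hb.1 hb.2⟩

theorem p_nonneg (a : ℤ) : 0 ≤ D.p a := by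
  by_cases h : a ∈ D.A
  · exact (D.hpos a h).le
  · exact (D.hzero a h).ge

theorem x_le_x_iff {i a : ℤ} (hi : i ∈ D.A) (ha : a ∈ D.A) : D.x i ≤ D.x a ↔ i ≤ a := by
  refine ⟨fun h => not_lt.1 fun hai => (D.hmono a i ha hi hai).not_ge h, fun h => ?_⟩
  rcases h.lt_or_eq with h | rfl
  · exact (D.hmono i a hi ha h).le
  · rfl

theorem x_injOn : Set.InjOn D.x D.A := fun _ hi _ ha h =>
  le_antisymm ((D.x_le_x_iff hi ha).1 h.le) ((D.x_le_x_iff ha hi).1 h.ge)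

theorem eq_zero_of_forall_p_add_eq {a : ℤ} {q : ℝ} (h : ∀ n : ℕ, D.p (a + n) = q) : q = 0 := by
  have hinj : Function.Injective fun n : ℕ => a + n := fun m n hmn => by simpa using hmn
  have hlim := D.hsummable.tendsto_cofinite_zero.comp hinj.tendsto_cofinite
  simp only [Function.comp_def, h] at hlim
  exact tendsto_nhds_unique tendsto_const_nhds hlim

theorem summable_ite (P : ℤ → Prop) [DecidablePred P] :
    Summable fun i => if P i then D.p i else 0 :=
  D.hsummable.of_nonneg_of_le (fun i => by split_ifs <;> simp [D.p_nonneg])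
    (fun i => by split_ifs <;> simp [D.p_nonneg])

theorem tsum_ite_le {P Q : ℤ → Prop} [DecidablePred P] [DecidablePred Q]
    (h : ∀ i ∈ D.A, P i → Q i) :
    (∑' i, if P i then D.p i else 0) ≤ ∑' i, if Q i then D.p i else 0 := by
  refine (D.summable_ite P).tsum_le_tsum (fun i => ?_) (D.summable_ite Q)
  by_cases hi : i ∈ D.A
  · by_cases hP : P i
    · simp [hP, h i hi hP]
    · split_ifs <;> simp [D.p_nonneg]
  · simp [D.hzero i hi]

theorem L_mono : Monotone D.L := fun _ _ hab => D.tsum_ite_le fun _ _ hi => hi.trans_le hab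

theorem L_nonneg (a : ℤ) : 0 ≤ D.L a :=
  tsum_nonneg fun i => by split_ifs <;> simp [D.p_nonneg]

theorem L_le_one (a : ℤ) : D.L a ≤ 1 := by
  calc D.L a ≤ ∑' i, if True then D.p i else 0 := D.tsum_ite_le fun _ _ _ => trivial
    _ = 1 := by simp [D.hsum]

theorem L_succ (a : ℤ) : D.L (a + 1) = D.L a + D.p a := by
  have h : ∀ i, (if i < a + 1 then D.p i else 0)
      = (if i < a then D.p i else 0) + if i = a then D.p a else 0 := by
    intro i
    split_ifs <;> first | omega | (subst_vars; simp)
  rw [L, tsum_congr h, (D.summable_ite _).tsum_add ⟨D.p a, hasSum_ite_eq a (D.p a)⟩, tsum_ite_eq]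
  rfl

theorem L_add_tsum_ge (c : ℤ) : D.L c + ∑' i, (if c ≤ i then D.p i else 0) = 1 := by
  rw [L, ← (D.summable_ite _).tsum_add (D.summable_ite _), ← D.hsum]
  exact tsum_congr fun i => by split_ifs <;> first | omega | simp

theorem L_lt_L_succ {a : ℤ} (ha : a ∈ D.A) : D.L a < D.L (a + 1) := by
  rw [L_succ]
  linarith [D.hpos a ha]

theorem mem_of_L_lt_L_succ {a : ℤ} (h : D.L a < D.L (a + 1)) : a ∈ D.A := by
  by_contra ha
  rw [L_succ, D.hzero a ha, add_zero] at h
  exact h.false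

theorem exists_mem_of_L_lt {b c : ℤ} (h : D.L b < D.L c) : ∃ i ∈ D.A, b ≤ i ∧ i < c := by
  by_contra! hc
  exact h.not_ge (D.tsum_ite_le fun i hi hic => not_le.1 fun hbi => (hc i hi hbi).not_gt hic)

theorem exists_finset_sum_gt {u : ℝ} (hu : u < 1) : ∃ s : Finset ℤ, u < ∑ i ∈ s, D.p i :=
  ((D.hsum ▸ D.hsummable.hasSum : HasSum D.p 1).eventually (Ioi_mem_nhds hu)).exists

theorem exists_lt_L {u : ℝ} (hu : u < 1) : ∃ c, u < D.L c := by
  obtain ⟨s, hs⟩ := D.exists_finset_sum_gt hu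
  obtain ⟨c, hc⟩ := s.exists_le
  refine ⟨c + 1, hs.trans_le ?_⟩
  calc ∑ i ∈ s, D.p i = ∑ i ∈ s, if i < c + 1 then D.p i else 0 :=
        Finset.sum_congr rfl fun i hi => by simp [Int.lt_add_one_iff.2 (hc i hi)]
    _ ≤ D.L (c + 1) :=
        (D.summable_ite _).sum_le_tsum s (fun i _ => by split_ifs <;> simp [D.p_nonneg])

theorem exists_L_lt {u : ℝ} (hu : 0 < u) : ∃ d, D.L d < u := by
  obtain ⟨s, hs⟩ := D.exists_finset_sum_gt (sub_lt_self 1 hu)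
  obtain ⟨d, hd⟩ := s.bddBelow
  have : ∑ i ∈ s, D.p i ≤ ∑' i, if d ≤ i then D.p i else 0 := by
    calc ∑ i ∈ s, D.p i = ∑ i ∈ s, if d ≤ i then D.p i else 0 :=
          Finset.sum_congr rfl fun i hi => by simp [hd hi]
      _ ≤ _ := (D.summable_ite _).sum_le_tsum s (fun i _ => by split_ifs <;> simp [D.p_nonneg])
  exact ⟨d, by linarith [D.L_add_tsum_ge d]⟩

theorem exists_mem_Ioc {u : ℝ} (h0 : 0 < u) (h1 : u < 1) :
    ∃ b ∈ D.A, u ∈ Set.Ioc (D.L b) (D.L (b + 1)) := by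
  obtain ⟨c, hc⟩ := D.exists_lt_L h1
  obtain ⟨d, hd⟩ := D.exists_L_lt h0
  obtain ⟨b, hb, hmax⟩ := Int.exists_greatest_of_bdd (P := fun b => D.L b < u)
    ⟨c, fun z hz => not_lt.1 fun hcz => (hz.trans hc).not_ge (D.L_mono hcz.le)⟩ ⟨d, hd⟩
  have hu : u ≤ D.L (b + 1) := not_lt.1 fun h => by have := hmax _ h; omega
  exact ⟨b, D.mem_of_L_lt_L_succ (hb.trans_le hu), hb, hu⟩

theorem mem_succ {a : ℤ} (ha : a ∈ D.A) (h : D.L (a + 1) < 1) : a + 1 ∈ D.A := by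
  obtain ⟨c, hc⟩ := D.exists_lt_L h
  obtain ⟨i, hi, hai, -⟩ := D.exists_mem_of_L_lt hc
  exact D.ordConnected.out ha hi ⟨by omega, hai⟩

theorem mem_of_succ_mem {a : ℤ} (ha : a + 1 ∈ D.A) (h : 0 < D.L (a + 1)) : a ∈ D.A := by
  obtain ⟨d, hd⟩ := D.exists_L_lt h
  obtain ⟨i, hi, -, hia⟩ := D.exists_mem_of_L_lt hd
  exact D.ordConnected.out hi ha ⟨by omega, by omega⟩

theorem le_cdf_iff {a : ℤ} (ha : a ∈ D.A) {u : ℝ} (hu : u ∈ Set.Ioc (D.L a) (D.L (a + 1)))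
    (t : ℝ) : u ≤ D.cdf t ↔ D.x a ≤ t := by
  constructor
  · intro h
    by_contra! ht
    have : D.cdf t ≤ D.L a := D.tsum_ite_le fun i hi hit =>
      not_le.1 fun hai => (((D.x_le_x_iff ha hi).2 hai).trans hit).not_gt ht
    linarith [hu.1]
  · intro h
    exact hu.2.trans (D.tsum_ite_le fun i hi hia =>
      ((D.x_le_x_iff hi ha).2 (Int.lt_add_one_iff.1 hia)).trans h)

end DiscDist

theorem drel_iff {F G : DiscDist} {a b : ℤ} :
    DRel F G a b ↔ a ∈ F.A ∧ b ∈ G.A ∧ G.L b < F.L (a + 1) ∧ F.L a < G.L (b + 1) := by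
  refine ⟨fun ⟨ha, hb, h⟩ => ?_, fun ⟨ha, hb, h1, h2⟩ => ?_⟩
  · exact ⟨ha, hb, (le_max_right _ _).trans_lt (h.trans_le (min_le_left _ _)),
      (le_max_left _ _).trans_lt (h.trans_le (min_le_right _ _))⟩
  · exact ⟨ha, hb, max_lt (lt_min (F.L_lt_L_succ ha) h2) (lt_min h1 (G.L_lt_L_succ hb))⟩

theorem exists_drel (F G : DiscDist) {a : ℤ} (ha : a ∈ F.A) : ∃ b, DRel F G a b := by
  have h := F.L_lt_L_succ ha
  obtain ⟨b, hb, hu⟩ := G.exists_mem_Ioc (u := (F.L a + F.L (a + 1)) / 2)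
    (by linarith [F.L_nonneg a]) (by linarith [F.L_le_one (a + 1)])
  exact ⟨b, drel_iff.2 ⟨ha, hb, by linarith [hu.1], by linarith [hu.2]⟩⟩

namespace DRel

variable {F G : DiscDist} {a b : ℤ}

theorem symm (h : DRel F G a b) : DRel G F b a := by
  obtain ⟨ha, hb, h1, h2⟩ := drel_iff.1 h
  exact drel_iff.2 ⟨hb, ha, h2, h1⟩

theorem of_L_eq (ha : a ∈ F.A) (hb : b ∈ G.A) (h : F.L a = G.L b) : DRel F G a b :=
  drel_iff.2 ⟨ha, hb, h ▸ F.L_lt_L_succ ha, h ▸ G.L_lt_L_succ hb⟩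

theorem of_L_succ_eq (ha : a ∈ F.A) (hb : b ∈ G.A) (h : F.L (a + 1) = G.L (b + 1)) :
    DRel F G a b :=
  drel_iff.2 ⟨ha, hb, h ▸ G.L_lt_L_succ hb, h ▸ F.L_lt_L_succ ha⟩

theorem succ_of_L_lt (H : ∀ a b, DRel F G a b → F.p a = G.p b)
    (hr : DRel F G a b) (hlt : F.L a < G.L b) :
    DRel F G (a + 1) (b + 1) ∧ F.L (a + 1) < G.L (b + 1) ∧ F.p (a + 1) = F.p a := by
  obtain ⟨ha, hb, h1, -⟩ := drel_iff.1 hr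
  have hFa := F.L_succ a
  have hGb := G.L_succ b
  have hq := H a b hr
  have ha1 : a + 1 ∈ F.A := F.mem_succ ha (by linarith [G.L_le_one (b + 1)])
  have hFa1 := F.L_lt_L_succ ha1
  have hp1 : F.p (a + 1) = F.p a := by
    rw [H _ _ (drel_iff.2 ⟨ha1, hb, by linarith, by linarith⟩), hq]
  have hFa2 := F.L_succ (a + 1)
  have hb1 : b + 1 ∈ G.A := G.mem_succ hb (by linarith [F.L_le_one (a + 1 + 1)])
  exact ⟨drel_iff.2 ⟨ha1, hb1, by linarith, by linarith [G.L_lt_L_succ hb1]⟩, by linarith, hp1⟩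

theorem not_L_lt (H : ∀ a b, DRel F G a b → F.p a = G.p b)
    (hr : DRel F G a b) : ¬ F.L a < G.L b := by
  intro hlt
  have orbit : ∀ n : ℕ,
      DRel F G (a + n) (b + n) ∧ F.L (a + n) < G.L (b + n) ∧ F.p (a + n) = F.p a := by
    intro n
    induction n with
    | zero => simpa using ⟨hr, hlt⟩
    | succ n ih =>
      obtain ⟨hr', hlt', hp'⟩ := ih
      obtain ⟨h1, h2, h3⟩ := succ_of_L_lt H hr' hlt'
      push_cast
      rw [← add_assoc, ← add_assoc]
      exact ⟨h1, h2, h3.trans hp'⟩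
  exact (F.hpos a hr.1).ne' (F.eq_zero_of_forall_p_add_eq fun n => (orbit n).2.2)

theorem L_eq_of_p_eq (H : ∀ a b, DRel F G a b → F.p a = G.p b)
    (hr : DRel F G a b) : F.L a = G.L b :=
  le_antisymm (not_lt.1 (not_L_lt (fun b a h => (H a b h.symm).symm) hr.symm))
    (not_lt.1 (not_L_lt H hr))

theorem L_succ_eq_of_p_eq (H : ∀ a b, DRel F G a b → F.p a = G.p b)
    (hr : DRel F G a b) : F.L (a + 1) = G.L (b + 1) := by
  rw [F.L_succ, G.L_succ, hr.L_eq_of_p_eq H, H a b hr]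

theorem succ (H : ∀ a b, DRel F G a b → F.p a = G.p b)
    (hr : DRel F G a b) (ha : a + 1 ∈ F.A) : DRel F G (a + 1) (b + 1) := by
  have h := hr.L_succ_eq_of_p_eq H
  have hb : b + 1 ∈ G.A :=
    G.mem_succ hr.2.1 (by linarith [F.L_lt_L_succ ha, F.L_le_one (a + 1 + 1)])
  exact of_L_eq ha hb h

theorem pred (H : ∀ a b, DRel F G a b → F.p a = G.p b)
    (hr : DRel F G (a + 1) (b + 1)) (ha : a ∈ F.A) : DRel F G a b := by
  have h := hr.L_eq_of_p_eq H
  have hb : b ∈ G.A := G.mem_of_succ_mem hr.2.1 (by linarith [F.L_lt_L_succ ha, F.L_nonneg a])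
  exact of_L_succ_eq ha hb h

theorem forall_add_sub (H : ∀ a b, DRel F G a b → F.p a = G.p b) {a₀ b₀ : ℤ}
    (h₀ : DRel F G a₀ b₀) :
    ∀ a ∈ F.A, DRel F G a (a + (b₀ - a₀)) :=
  F.ordConnected.int_induction h₀.1 (by rwa [add_sub_cancel])
    (fun _ _ ha hr => by rw [add_right_comm]; exact hr.succ H ha)
    (fun _ ha _ hr => by rw [add_right_comm] at hr; exact hr.pred H ha)

end DRel

variable {F G : DiscDist}

theorem x_add_sub_x_eq_of_discoA (hFG : discoA F G) (hGF : discoA G F) {k : ℤ}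
    (hk : ∀ a ∈ F.A, DRel F G a (a + k)) {a₀ : ℤ} (ha₀ : a₀ ∈ F.A) :
    ∀ a ∈ F.A, G.x (a + k) - F.x a = G.x (a₀ + k) - F.x a₀ := by
  have step : ∀ a, a ∈ F.A → a + 1 ∈ F.A →
      G.x (a + 1 + k) - F.x (a + 1) = G.x (a + k) - F.x a := by
    intro a ha ha1
    have e₁ : a + 1 - 1 = a := by ring
    have e₂ : a + 1 + k - 1 = a + k := by ring
    have hr := hk (a + 1) ha1
    have hr' : DRel F G (a + 1 - 1) (a + 1 + k - 1) := by rw [e₁, e₂]; exact hk a ha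
    have h₁ := hFG.2 _ _ hr hr'
    have h₂ := hGF.2 _ _ hr.symm hr'.symm
    rw [e₁, e₂] at h₁ h₂
    linarith
  exact F.ordConnected.int_induction ha₀ rfl (fun a ha ha1 h => (step a ha ha1).trans h)
    (fun a ha ha1 h => (step a ha ha1).symm.trans h)

theorem cdf_eq_of_reindex {k : ℤ} {l : ℝ} (hp : ∀ a, G.p (a + k) = F.p a)
    (hx : ∀ a ∈ F.A, G.x (a + k) = F.x a + l) (t : ℝ) : G.cdf t = F.cdf (t - l) := by
  rw [DiscDist.cdf, ← (Equiv.addRight k).tsum_eq, DiscDist.cdf]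
  refine tsum_congr fun a => ?_
  by_cases ha : a ∈ F.A
  · simp only [Equiv.coe_addRight, hx a ha, hp a, le_sub_iff_add_le]
  · simp [hp a, F.hzero a ha]

theorem exists_cdf_eq_of_discoA (hFG : discoA F G) (hGF : discoA G F) :
    ∃ l : ℝ, ∀ t : ℝ, G.cdf t = F.cdf (t - l) := by
  have H : ∀ a b, DRel F G a b → F.p a = G.p b := fun a b hr =>
    le_antisymm (hGF.1 b a hr.symm) (hFG.1 a b hr)
  obtain ⟨a₀, -, ha₀, -, -⟩ := F.hA2
  obtain ⟨b₀, h₀⟩ := exists_drel F G ha₀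
  have hF := h₀.forall_add_sub H
  have hG := h₀.symm.forall_add_sub fun b a hr => (H a b hr.symm).symm
  have hp : ∀ a, G.p (a + (b₀ - a₀)) = F.p a := by
    intro a
    by_cases ha : a ∈ F.A
    · exact (H _ _ (hF a ha)).symm
    · have hb : a + (b₀ - a₀) ∉ G.A := fun hb => ha <| by
        simpa [show a + (b₀ - a₀) + (a₀ - b₀) = a by ring] using (hG _ hb).2.1
      rw [F.hzero a ha, G.hzero _ hb]
  refine ⟨G.x (a₀ + (b₀ - a₀)) - F.x a₀, cdf_eq_of_reindex hp fun a ha => ?_⟩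
  linarith [x_add_sub_x_eq_of_discoA hFG hGF hF ha₀ a ha]

theorem cdf_eq_neg_shift {l : ℝ} (hl : ∀ t, G.cdf t = F.cdf (t - l)) (t : ℝ) :
    F.cdf t = G.cdf (t - -l) := by
  rw [hl, sub_neg_eq_add, add_sub_cancel_right]

theorem x_eq_of_cdf_eq {l : ℝ} (hl : ∀ t, G.cdf t = F.cdf (t - l)) {a b : ℤ} (ha : a ∈ F.A)
    (hb : b ∈ G.A) {u : ℝ} (hua : u ∈ Set.Ioc (F.L a) (F.L (a + 1)))
    (hub : u ∈ Set.Ioc (G.L b) (G.L (b + 1))) : G.x b = F.x a + l := by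
  have hiff : ∀ t, G.x b ≤ t ↔ F.x a + l ≤ t := fun t => by
    rw [← G.le_cdf_iff hb hub, hl, F.le_cdf_iff ha hua, le_sub_iff_add_le]
  exact le_antisymm ((hiff _).2 le_rfl) ((hiff _).1 le_rfl)

theorem mem_Ioc_of_cdf_eq {l : ℝ} (hl : ∀ t, G.cdf t = F.cdf (t - l)) {a b : ℤ} (ha : a ∈ F.A)
    (hb : b ∈ G.A) {u : ℝ} (hua : u ∈ Set.Ioc (F.L a) (F.L (a + 1)))
    (hub : u ∈ Set.Ioc (G.L b) (G.L (b + 1))) {v : ℝ} (hv : v ∈ Set.Ioc (F.L a) (F.L (a + 1)))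
    (hv1 : v < 1) : v ∈ Set.Ioc (G.L b) (G.L (b + 1)) := by
  obtain ⟨b', hb', hv'⟩ := G.exists_mem_Ioc ((F.L_nonneg a).trans_lt hv.1) hv1
  obtain rfl : b' = b := G.x_injOn hb' hb
    (by rw [x_eq_of_cdf_eq hl ha hb' hv hv', x_eq_of_cdf_eq hl ha hb hua hub])
  exact hv'

namespace DRel

variable {a b : ℤ}

theorem L_le_of_cdf_eq {l : ℝ} (hl : ∀ t, G.cdf t = F.cdf (t - l)) (hr : DRel F G a b) :
    G.L b ≤ F.L a ∧ F.L (a + 1) ≤ G.L (b + 1) := by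
  obtain ⟨ha, hb, h₁, h₂⟩ := drel_iff.1 hr
  have hFa := F.L_lt_L_succ ha
  have hGb := G.L_lt_L_succ hb
  have hsub := @mem_Ioc_of_cdf_eq F G l hl a b ha hb _
    ⟨lt_min hFa h₂, min_le_left _ _⟩ ⟨lt_min h₁ hGb, min_le_right _ _⟩
  constructor
  · by_contra! h
    have := hsub (v := min (G.L b) (F.L (a + 1))) ⟨lt_min h hFa, min_le_right _ _⟩
      ((min_le_left _ _).trans_lt (hGb.trans_le (G.L_le_one _)))
    exact this.1.not_ge (min_le_left _ _)
  · by_contra! h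
    have := hsub (v := (G.L (b + 1) + F.L (a + 1)) / 2) ⟨by linarith, by linarith⟩
      (by linarith [F.L_le_one (a + 1)])
    linarith [this.2]

theorem L_eq_of_cdf_eq {l : ℝ} (hl : ∀ t, G.cdf t = F.cdf (t - l)) (hr : DRel F G a b) :
    F.L a = G.L b ∧ F.L (a + 1) = G.L (b + 1) := by
  obtain ⟨h₁, h₂⟩ := hr.L_le_of_cdf_eq hl
  obtain ⟨h₃, h₄⟩ := hr.symm.L_le_of_cdf_eq (cdf_eq_neg_shift hl)
  exact ⟨le_antisymm h₃ h₁, le_antisymm h₂ h₄⟩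

theorem x_eq_of_cdf_eq {l : ℝ} (hl : ∀ t, G.cdf t = F.cdf (t - l)) (hr : DRel F G a b) :
    G.x b = F.x a + l := by
  have h := (hr.L_eq_of_cdf_eq hl).2
  exact _root_.x_eq_of_cdf_eq hl hr.1 hr.2.1 ⟨F.L_lt_L_succ hr.1, le_rfl⟩
    ⟨by linarith [G.L_lt_L_succ hr.2.1], h.le⟩

end DRel

theorem discoO_of_cdf_eq {l : ℝ} (hl : ∀ t, G.cdf t = F.cdf (t - l)) : discoO F G := by
  refine ⟨fun a b hr => ?_, fun a b ha ha' hb hb' hr => ?_⟩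
  · obtain ⟨h₁, h₂⟩ := hr.L_eq_of_cdf_eq hl
    linarith [F.L_succ a, G.L_succ b]
  · have hboth : DRel F G a b ∧ DRel F G (a - 1) (b - 1) := by
      rcases hr with hr | hr
      · refine ⟨hr, DRel.of_L_succ_eq ha' hb' ?_⟩
        rw [sub_add_cancel, sub_add_cancel]
        exact (hr.L_eq_of_cdf_eq hl).1
      · refine ⟨DRel.of_L_eq ha hb ?_, hr⟩
        simpa using (hr.L_eq_of_cdf_eq hl).2
    linarith [hboth.1.x_eq_of_cdf_eq hl, hboth.2.x_eq_of_cdf_eq hl]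

theorem discoO.discoA (h : discoO F G) : discoA F G :=
  ⟨h.1, fun a b hr hr' => h.2 a b hr.1 hr'.1 hr.2.1 hr'.2.1 (Or.inl hr)⟩

/-- Equivalence with respect to either discrete dispersive order holds exactly
when the two distributions differ by a shift. -/
theorem stmt_11 (F G : DiscDist) :
    ((discoA F G ∧ discoA G F) ↔ (discoO F G ∧ discoO G F)) ∧
    ((discoA F G ∧ discoA G F) ↔
      ∃ l : ℝ, ∀ t : ℝ, G.cdf t = F.cdf (t - l)) := by
  have hAS : discoA F G ∧ discoA G F → ∃ l : ℝ, ∀ t, G.cdf t = F.cdf (t - l) :=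
    fun h => exists_cdf_eq_of_discoA h.1 h.2
  have hSO : (∃ l : ℝ, ∀ t, G.cdf t = F.cdf (t - l)) → discoO F G ∧ discoO G F :=
    fun ⟨_, hl⟩ => ⟨discoO_of_cdf_eq hl, discoO_of_cdf_eq (cdf_eq_neg_shift hl)⟩
  have hOA : discoO F G ∧ discoO G F → discoA F G ∧ discoA G F :=
    fun h => ⟨h.1.discoA, h.2.discoA⟩
  exact ⟨⟨hSO ∘ hAS, hOA⟩, ⟨hAS, hOA ∘ hSO⟩⟩
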